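/- Let p, q, r, α satisfy the Knapp condition with equality failure: if f is (a smooth bump adapted to) the characteristic function of the δ-neighbourhood T of a unit line segment l₀ = l(0,0) = {(0,t) : t ∈ [0,1]} in ℝⁿ, then ‖f‖_p ≍ δ^{(n-1)/p}, and for all (x,v) with |x| ≤ δ, |v| ≤ δ we have Xf(l(x,v)) ≥ c > 0, hence ‖Xf‖_{L^q_v L^r_x} ≥ c δ^{(n-1)/q + (n-1)/r}. Consequently, if the a priori estimate ‖Xf‖_{L^q_v L^r_x} ≤ C δ^{-α} ‖f‖_p holds for all such f and all small δ, then (n-1)/q + (n-1)/r ≥ (n-1)/p − α. -/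

import Mathlib

open Metric MeasureTheory Filter Topology Set

/-- The line segment `l(x,v) = {(x+tv, t) : t ∈ [0,1]}` in `ℝ^{n-1} × ℝ`. -/
def seg (n : ℕ) (x v : EuclideanSpace ℝ (Fin n)) :
    Set ((EuclideanSpace ℝ (Fin n)) × ℝ) :=
  {p | ∃ t ∈ Set.Icc (0 : ℝ) 1, p = (x + t • v, t)}

/-- The x-ray transform `Xf(l(x,v)) = ∫₀¹ f(x+tv, t) dt` (for nonnegative `f`). -/
noncomputable def xray (n : ℕ) (f : (EuclideanSpace ℝ (Fin n)) × ℝ → ENNReal)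
    (x v : EuclideanSpace ℝ (Fin n)) : ENNReal :=
  ∫⁻ t in Set.Icc (0 : ℝ) 1, f (x + t • v, t)

/-- The mixed norm `‖F‖_{L^q_v L^r_x}` over `(v,x) ∈ B^{n-1}(0,1)²`. -/
noncomputable def mixedNorm (n : ℕ) (q r : ℝ)
    (F : EuclideanSpace ℝ (Fin n) → EuclideanSpace ℝ (Fin n) → ENNReal) : ENNReal :=
  (∫⁻ v in ball (0 : EuclideanSpace ℝ (Fin n)) 1,
      (∫⁻ x in ball (0 : EuclideanSpace ℝ (Fin n)) 1, (F v x) ^ r) ^ (q / r)) ^ (1 / q)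

/-!
Knapp example. For `|x|, |v| < δ/2` the segment `l(x,v)` stays inside the closed
`δ`-neighbourhood `T` of `l(0,0)`, so `X 1_T = 1` on a set of `(v,x)` of measure `≍ δ^{n-1}` in each
variable and `‖X 1_T‖_{L^q_v L^r_x} ≳ δ^{(n-1)(1/q + 1/r)}`, while `‖1_T‖_p ≲ δ^{(n-1)/p}`. Letting
`δ → 0` in the estimate compares the exponents.
-/

theorem le_of_forall_mul_rpow_le {a b s t δ₀ : ℝ} (ha : 0 < a) (hδ₀ : 0 < δ₀)
    (h : ∀ δ : ℝ, 0 < δ → δ ≤ δ₀ → a * δ ^ s ≤ b * δ ^ t) : t ≤ s := by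
  by_contra! hst
  have hts : 0 < t - s := sub_pos.2 hst
  have hlim : Tendsto (fun δ : ℝ => b * δ ^ (t - s)) (𝓝[>] 0) (𝓝 0) := by
    have := (Real.continuousAt_rpow_const 0 (t - s) (Or.inr hts.le)).tendsto.const_mul b
    simpa [Real.zero_rpow hts.ne'] using this.mono_left nhdsWithin_le_nhds
  have hev : ∀ᶠ δ in 𝓝[>] 0, a ≤ b * δ ^ (t - s) := by
    filter_upwards [Ioc_mem_nhdsGT hδ₀] with δ hδ
    rw [Real.rpow_sub hδ.1, ← mul_div_assoc, le_div_iff₀ (Real.rpow_pos_of_pos hδ.1 s)]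
    exact h δ hδ.1 hδ.2
  exact ha.not_ge (ge_of_tendsto hlim hev)

section

variable {m : ℕ}

theorem seg_eq_image (x v : EuclideanSpace ℝ (Fin m)) :
    seg m x v = (fun t : ℝ => (x + t • v, t)) '' Icc 0 1 := by
  ext p
  simp only [seg, mem_ofPred_eq, mem_image, eq_comm (a := p)]

theorem isCompact_seg (x v : EuclideanSpace ℝ (Fin m)) : IsCompact (seg m x v) := by
  rw [seg_eq_image]
  exact isCompact_Icc.image (by fun_prop)

theorem cthickening_seg_zero_subset {δ : ℝ} (hδ : 0 ≤ δ) :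
    cthickening δ (seg m 0 0) ⊆ closedBall 0 δ ×ˢ Icc (-δ) (1 + δ) := by
  rw [(isCompact_seg 0 0).cthickening_eq_biUnion_closedBall hδ]
  intro p hp
  obtain ⟨_, ⟨t, ht, rfl⟩, hpt⟩ := mem_iUnion₂.mp hp
  rw [mem_closedBall, Prod.dist_eq, max_le_iff, Real.dist_eq, abs_le] at hpt
  simp only [smul_zero, add_zero, dist_zero_right] at hpt
  exact ⟨mem_closedBall_zero_iff.2 hpt.1, by linarith [ht.1], by linarith [ht.2]⟩

theorem volume_cthickening_seg_zero_le {δ : ℝ} (hδ : 0 ≤ δ) :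
    volume (cthickening δ (seg m 0 0)) ≤
      volume (closedBall (0 : EuclideanSpace ℝ (Fin m)) δ) * ENNReal.ofReal (1 + 2 * δ) := by
  calc volume (cthickening δ (seg m 0 0))
      ≤ volume (closedBall (0 : EuclideanSpace ℝ (Fin m)) δ ×ˢ Icc (-δ) (1 + δ)) :=
        measure_mono (cthickening_seg_zero_subset hδ)
    _ = _ := by
        rw [Measure.volume_eq_prod, Measure.prod_prod, Real.volume_Icc]
        ring_nf

theorem mem_cthickening_seg_zero {δ t : ℝ} {x v : EuclideanSpace ℝ (Fin m)}
    (hxv : ‖x‖ + ‖v‖ ≤ δ) (ht : t ∈ Icc (0 : ℝ) 1) :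
    (x + t • v, t) ∈ cthickening δ (seg m 0 0) := by
  refine mem_cthickening_of_dist_le _ ((0 : EuclideanSpace ℝ (Fin m)), t) δ _ ⟨t, ht, by simp⟩ ?_
  rw [Prod.dist_eq, dist_self, dist_zero_right, max_eq_left (norm_nonneg _)]
  calc ‖x + t • v‖ ≤ ‖x‖ + ‖t • v‖ := norm_add_le _ _
    _ = ‖x‖ + t * ‖v‖ := by rw [norm_smul, Real.norm_of_nonneg ht.1]
    _ ≤ ‖x‖ + ‖v‖ := by gcongr; exact mul_le_of_le_one_left (norm_nonneg v) ht.2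
    _ ≤ δ := hxv

theorem xray_indicator_eq_one {S : Set (EuclideanSpace ℝ (Fin m) × ℝ)}
    {x v : EuclideanSpace ℝ (Fin m)} (h : ∀ t ∈ Icc (0 : ℝ) 1, (x + t • v, t) ∈ S) :
    xray m (S.indicator fun _ => 1) x v = 1 := by
  rw [xray, setLIntegral_congr_fun measurableSet_Icc fun t ht => indicator_of_mem (h t ht) _,
    setLIntegral_one, Real.volume_Icc, sub_zero, ENNReal.ofReal_one]

theorem volume_ball_rpow_le_mixedNorm {q r ρ : ℝ} (hq : 0 < q) (hr : 0 < r) (hρ : ρ ≤ 1)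
    {F : EuclideanSpace ℝ (Fin m) → EuclideanSpace ℝ (Fin m) → ENNReal}
    (hF : ∀ v ∈ ball 0 ρ, ∀ x ∈ ball 0 ρ, 1 ≤ F v x) :
    volume (ball (0 : EuclideanSpace ℝ (Fin m)) ρ) ^ (1 / r + 1 / q) ≤ mixedNorm m q r F := by
  set W := volume (ball (0 : EuclideanSpace ℝ (Fin m)) ρ)
  have inner : ∀ v ∈ ball 0 ρ, W ≤ ∫⁻ x in ball 0 1, F v x ^ r := fun v hv =>
    calc W = ∫⁻ _ in ball 0 ρ, 1 := (setLIntegral_one _).symm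
      _ ≤ ∫⁻ x in ball 0 ρ, F v x ^ r :=
        setLIntegral_mono' measurableSet_ball fun x hx => ENNReal.one_le_rpow (hF v hv x hx) hr
      _ ≤ _ := lintegral_mono_set (ball_subset_ball hρ)
  have outer : W ^ (q / r) * W ≤ ∫⁻ v in ball 0 1, (∫⁻ x in ball 0 1, F v x ^ r) ^ (q / r) :=
    calc W ^ (q / r) * W = ∫⁻ _ in ball 0 ρ, W ^ (q / r) := (setLIntegral_const _ _).symm
      _ ≤ ∫⁻ v in ball 0 ρ, (∫⁻ x in ball 0 1, F v x ^ r) ^ (q / r) :=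
        setLIntegral_mono' measurableSet_ball fun v hv =>
          ENNReal.rpow_le_rpow (inner v hv) (by positivity)
      _ ≤ _ := lintegral_mono_set (ball_subset_ball hρ)
  calc W ^ (1 / r + 1 / q) = (W ^ (q / r) * W) ^ (1 / q) := by
        rw [ENNReal.mul_rpow_of_nonneg _ _ (by positivity), ← ENNReal.rpow_mul,
          ← ENNReal.rpow_add_of_nonneg _ _ (by positivity) (by positivity)]
        congr 1
        field_simp
    _ ≤ mixedNorm m q r F := ENNReal.rpow_le_rpow outer (by positivity)

theorem volume_ball_rpow_le_mixedNorm_xray_indicator {q r δ : ℝ} (hq : 0 < q) (hr : 0 < r)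
    (hδ : δ ≤ 2) :
    volume (ball (0 : EuclideanSpace ℝ (Fin m)) (δ / 2)) ^ (1 / r + 1 / q) ≤
      mixedNorm m q r (fun v x =>
        xray m ((cthickening δ (seg m 0 0)).indicator fun _ => 1) x v) := by
  refine volume_ball_rpow_le_mixedNorm hq hr (by linarith) fun v hv x hx => ?_
  rw [mem_ball_zero_iff] at hv hx
  rw [xray_indicator_eq_one fun t ht => mem_cthickening_seg_zero (by linarith) ht]

theorem volume_cthickening_seg_zero_le_ofReal {δ w : ℝ} (hδ : 0 < δ) (hδ1 : δ ≤ 1)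
    (hw : volume (ball (0 : EuclideanSpace ℝ (Fin m)) 1) = ENNReal.ofReal w) (hw0 : 0 < w) :
    volume (cthickening δ (seg m 0 0)) ≤ ENNReal.ofReal (3 * w * δ ^ m) :=
  calc volume (cthickening δ (seg m 0 0))
      ≤ volume (closedBall (0 : EuclideanSpace ℝ (Fin m)) δ) * ENNReal.ofReal (1 + 2 * δ) :=
        volume_cthickening_seg_zero_le hδ.le
    _ = ENNReal.ofReal (w * δ ^ m * (1 + 2 * δ)) := by
        rw [Measure.addHaar_closedBall _ _ hδ.le, finrank_euclideanSpace_fin, hw,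
          ← ENNReal.ofReal_mul (by positivity), ← ENNReal.ofReal_mul (by positivity), mul_comm w]
    _ ≤ ENNReal.ofReal (3 * w * δ ^ m) := ENNReal.ofReal_le_ofReal <| by
        nlinarith [mul_nonneg (mul_pos hw0 (pow_pos hδ m)).le (sub_nonneg.2 hδ1)]

theorem mul_rpow_le_of_mixedNorm_xray_le {p q r α C δ w : ℝ} (hp : 0 < p) (hq : 0 < q)
    (hr : 0 < r) (hδ : 0 < δ) (hδ1 : δ ≤ 1)
    (hw : volume (ball (0 : EuclideanSpace ℝ (Fin m)) 1) = ENNReal.ofReal w) (hw0 : 0 < w)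
    (H : mixedNorm m q r
          (fun v x => xray m ((cthickening δ (seg m 0 0)).indicator fun _ => 1) x v)
        ≤ ENNReal.ofReal (C * δ ^ (-α)) * volume (cthickening δ (seg m 0 0)) ^ (1 / p)) :
    (w / 2 ^ m) ^ (1 / r + 1 / q) * δ ^ (m * (1 / r + 1 / q)) ≤
      C * (3 * w) ^ (1 / p) * δ ^ (m / p - α) := by
  set s := 1 / r + 1 / q
  have hlow : ENNReal.ofReal ((w / 2 ^ m) ^ s * δ ^ (m * s)) ≤ mixedNorm m q r
      (fun v x => xray m ((cthickening δ (seg m 0 0)).indicator fun _ => 1) x v) := by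
    have hball : volume (ball (0 : EuclideanSpace ℝ (Fin m)) (δ / 2)) =
        ENNReal.ofReal (w / 2 ^ m * δ ^ m) := by
      rw [Measure.addHaar_ball_of_pos _ _ (by positivity), finrank_euclideanSpace_fin, hw,
        ← ENNReal.ofReal_mul (by positivity), div_pow]
      ring_nf
    calc ENNReal.ofReal ((w / 2 ^ m) ^ s * δ ^ (m * s))
        = volume (ball (0 : EuclideanSpace ℝ (Fin m)) (δ / 2)) ^ s := by
          rw [hball, ENNReal.ofReal_rpow_of_nonneg (by positivity) (by positivity),
            Real.mul_rpow (by positivity) (by positivity), ← Real.rpow_natCast δ m,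
            ← Real.rpow_mul hδ.le]
      _ ≤ _ := volume_ball_rpow_le_mixedNorm_xray_indicator hq hr (by linarith)
  have hup : volume (cthickening δ (seg m 0 0)) ^ (1 / p) ≤
      ENNReal.ofReal ((3 * w) ^ (1 / p) * δ ^ (m / p)) := by
    calc volume (cthickening δ (seg m 0 0)) ^ (1 / p)
        ≤ ENNReal.ofReal (3 * w * δ ^ m) ^ (1 / p) := by
          gcongr; exact volume_cthickening_seg_zero_le_ofReal hδ hδ1 hw hw0
      _ = _ := by
          rw [ENNReal.ofReal_rpow_of_nonneg (by positivity) (by positivity),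
            Real.mul_rpow (by positivity) (by positivity), ← Real.rpow_natCast δ m,
            ← Real.rpow_mul hδ.le, mul_one_div]
  have h := (hlow.trans H).trans (mul_le_mul_right hup _)
  rw [← ENNReal.ofReal_mul' (by positivity), ENNReal.ofReal_le_ofReal_iff'] at h
  calc (w / 2 ^ m) ^ s * δ ^ (m * s)
      ≤ C * δ ^ (-α) * ((3 * w) ^ (1 / p) * δ ^ (m / p)) :=
        h.resolve_right (not_le.2 (by positivity))
    _ = C * (3 * w) ^ (1 / p) * δ ^ (m / p - α) := by
        rw [sub_eq_add_neg, Real.rpow_add hδ]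
        ring

end

theorem stmt8_general (n : ℕ) (hn : 2 ≤ n) (p q r α C δ₀ : ℝ)
    (hp : 1 ≤ p) (hq : 1 ≤ q) (hr : 1 ≤ r) (hδ₀ : 0 < δ₀)
    (H : ∀ δ : ℝ, 0 < δ → δ ≤ δ₀ →
      mixedNorm (n - 1) q r
          (fun v x => xray (n - 1)
            ((cthickening δ (seg (n - 1) 0 0)).indicator fun _ => (1 : ENNReal)) x v)
        ≤ ENNReal.ofReal (C * δ ^ (-α)) *
          (volume (cthickening δ (seg (n - 1) 0 0))) ^ (1 / p)) :
    ((n : ℝ) - 1) / q + ((n : ℝ) - 1) / r ≥ ((n : ℝ) - 1) / p - α := by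
  set m := n - 1
  set w := (volume (ball (0 : EuclideanSpace ℝ (Fin m)) 1)).toReal
  have hw : volume (ball (0 : EuclideanSpace ℝ (Fin m)) 1) = ENNReal.ofReal w :=
    (ENNReal.ofReal_toReal measure_ball_lt_top.ne).symm
  have hw0 : 0 < w := ENNReal.toReal_pos (measure_ball_pos _ _ one_pos).ne' measure_ball_lt_top.ne
  have hexp : (m : ℝ) / p - α ≤ m * (1 / r + 1 / q) :=
    le_of_forall_mul_rpow_le (by positivity) (lt_min hδ₀ one_pos) fun δ hδ hδle =>
      mul_rpow_le_of_mixedNorm_xray_le (by linarith) (by linarith) (by linarith) hδ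
        (hδle.trans (min_le_right _ _)) hw hw0 (H δ hδ (hδle.trans (min_le_left _ _)))
  have hm : (m : ℝ) = n - 1 := by rw [Nat.cast_sub (by omega), Nat.cast_one]
  rw [hm] at hexp
  linarith [show ((n : ℝ) - 1) * (1 / r + 1 / q) = ((n : ℝ) - 1) / q + ((n : ℝ) - 1) / r by ring]

/-- Knapp example necessary condition: if the a priori x-ray estimate
`‖Xf‖_{L^q_v L^r_x} ≤ C δ^{-α} ‖f‖_p` holds for the characteristic functions of the
δ-neighbourhoods of the segment `l(0,0)` for all small `δ`, then
`(n-1)/q + (n-1)/r ≥ (n-1)/p − α`. -/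
theorem stmt8 (n : ℕ) (hn : 2 ≤ n) (p q r α C δ₀ : ℝ)
    (hp : 1 ≤ p) (hq : 1 ≤ q) (hr : 1 ≤ r) (hα : 0 ≤ α) (hC : 0 < C) (hδ₀ : 0 < δ₀)
    (H : ∀ δ : ℝ, 0 < δ → δ ≤ δ₀ →
      mixedNorm (n - 1) q r
          (fun v x => xray (n - 1)
            ((cthickening δ (seg (n - 1) 0 0)).indicator fun _ => (1 : ENNReal)) x v)
        ≤ ENNReal.ofReal (C * δ ^ (-α)) *
          (volume (cthickening δ (seg (n - 1) 0 0))) ^ (1 / p)) :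
    ((n : ℝ) - 1) / q + ((n : ℝ) - 1) / r ≥ ((n : ℝ) - 1) / p - α :=
  stmt8_general n hn p q r α C δ₀ hp hq hr hδ₀ H
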